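/- For functions F, G, H in the Schwartz class on ℝ and any ε > 0, one has |∫_ℝ F·G·H dt| ≤ C(ε)·‖F‖_{H^{1/2+ε}}·‖G‖_{H^{1/2+ε}}·‖H‖_{H^{-1/4+ε}}. -/

import Mathlib

open MeasureTheory FourierTransform

noncomputable def sobNorm1 (σ : ℝ) (F : ℝ → ℂ) : ℝ :=
  (∫ τ : ℝ, Real.sqrt (1 + τ ^ 2) ^ (2 * σ) * ‖𝓕 F τ‖ ^ 2) ^ ((1:ℝ)/2)

/-!
By Parseval and the convolution theorem, `∫ F G H = ∫∫ 𝓕F(ξ) 𝓕⁻G(η) 𝓕⁻H(ξ - η) dη dξ`.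
Write `|𝓕F(ξ)| = ⟨ξ⟩^(-s) f(ξ)`, `|𝓕⁻G(η)| = ⟨η⟩^(-s) g(η)` and `|𝓕⁻H(ζ)| = ⟨ζ⟩^p h(ζ)` with
`s = 1/2 + ε` and `p = 1/4`, so that `‖f‖₂`, `‖g‖₂`, `‖h‖₂` are the Sobolev norms of `F`, `G` of
order `s` and of `H` of order `-p`. Since `⟨ξ - η⟩^p ≤ ⟨ξ⟩^p + ⟨η⟩^p`, the kernel
`⟨ξ⟩^(-s) ⟨η⟩^(-s) ⟨ξ - η⟩^p` is at most `⟨ξ⟩^(p-s) ⟨η⟩^(-s) + ⟨ξ⟩^(-s) ⟨η⟩^(p-s)`, and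
`⟨·⟩^(p-s) ≤ 1`. In the first term, Cauchy–Schwarz in `ξ` bounds `∫ f(ξ) h(ξ - η) dξ` by
`‖f‖₂ ‖h‖₂` uniformly in `η`, and Cauchy–Schwarz in `η` bounds `∫ ⟨η⟩^(-s) g(η) dη` by
`‖⟨·⟩^(-s)‖₂ ‖g‖₂`, which is finite because `2s > 1`; the second term is symmetric. Finally
`‖H‖_{H^(-1/4)} ≤ ‖H‖_{H^(-1/4+ε)}`.
-/

open scoped SchwartzMap ENNReal

theorem lintegral_mul_le_eLpNorm_two_mul {α : Type*} [MeasurableSpace α] {μ : Measure α}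
    {f g : α → ℝ≥0∞} (hf : AEMeasurable f μ) (hg : AEMeasurable g μ) :
    ∫⁻ x, f x * g x ∂μ ≤ eLpNorm f 2 μ * eLpNorm g 2 μ := by
  simpa [eLpNorm_eq_lintegral_rpow_enorm_toReal, one_div] using
    ENNReal.lintegral_mul_le_Lp_mul_Lq μ Real.HolderConjugate.two_two hf hg

section Young

variable {G : Type*} [AddCommGroup G] [MeasurableSpace G] [MeasurableAdd₂ G] [MeasurableNeg G]
  {μ : Measure G} {f g h : G → ℝ≥0∞}

theorem lintegral_mul_comp_sub_right_le [μ.IsAddRightInvariant] (hf : Measurable f)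
    (hh : Measurable h) (η : G) :
    ∫⁻ ξ, f ξ * h (ξ - η) ∂μ ≤ eLpNorm f 2 μ * eLpNorm h 2 μ := by
  have hshift := eLpNorm_comp_measurePreserving (p := 2) hh.aestronglyMeasurable
    (measurePreserving_sub_right μ η)
  exact (lintegral_mul_le_eLpNorm_two_mul hf.aemeasurable
    (hh.comp (measurable_sub_const η)).aemeasurable).trans_eq (by rw [← hshift])

theorem lintegral_mul_comp_sub_left_le [μ.IsAddLeftInvariant] [μ.IsNegInvariant]
    (hg : Measurable g) (hh : Measurable h) (ξ : G) :
    ∫⁻ η, g η * h (ξ - η) ∂μ ≤ eLpNorm g 2 μ * eLpNorm h 2 μ := by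
  have hreflect := eLpNorm_comp_measurePreserving (p := 2) hh.aestronglyMeasurable
    (Measure.measurePreserving_sub_left μ ξ)
  exact (lintegral_mul_le_eLpNorm_two_mul hg.aemeasurable
    (hh.comp (measurable_const_sub ξ)).aemeasurable).trans_eq (by rw [← hreflect])

theorem lintegral_lintegral_mul_comp_sub_le_snd [SFinite μ] [μ.IsAddRightInvariant]
    (hf : Measurable f) (hg : Measurable g) (hh : Measurable h) :
    ∫⁻ ξ, ∫⁻ η, f ξ * g η * h (ξ - η) ∂μ ∂μ ≤ eLpNorm f 2 μ * eLpNorm h 2 μ * ∫⁻ η, g η ∂μ := by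
  rw [lintegral_lintegral_swap (by fun_prop)]
  calc ∫⁻ η, ∫⁻ ξ, f ξ * g η * h (ξ - η) ∂μ ∂μ
      = ∫⁻ η, g η * ∫⁻ ξ, f ξ * h (ξ - η) ∂μ ∂μ := by
        refine lintegral_congr fun η => ?_
        rw [← lintegral_const_mul _ (by fun_prop)]
        exact lintegral_congr fun ξ => by ring
    _ ≤ ∫⁻ η, g η * (eLpNorm f 2 μ * eLpNorm h 2 μ) ∂μ :=
        lintegral_mono fun η => mul_le_mul_right (lintegral_mul_comp_sub_right_le hf hh η) _
    _ = eLpNorm f 2 μ * eLpNorm h 2 μ * ∫⁻ η, g η ∂μ := by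
        rw [lintegral_mul_const _ hg, mul_comm]

theorem lintegral_lintegral_mul_comp_sub_le_fst [μ.IsAddLeftInvariant] [μ.IsNegInvariant]
    (hf : Measurable f) (hg : Measurable g) (hh : Measurable h) :
    ∫⁻ ξ, ∫⁻ η, f ξ * g η * h (ξ - η) ∂μ ∂μ ≤ eLpNorm g 2 μ * eLpNorm h 2 μ * ∫⁻ ξ, f ξ ∂μ := by
  calc ∫⁻ ξ, ∫⁻ η, f ξ * g η * h (ξ - η) ∂μ ∂μ
      = ∫⁻ ξ, f ξ * ∫⁻ η, g η * h (ξ - η) ∂μ ∂μ := by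
        refine lintegral_congr fun ξ => ?_
        rw [← lintegral_const_mul _ (by fun_prop)]
        exact lintegral_congr fun η => by ring
    _ ≤ ∫⁻ ξ, f ξ * (eLpNorm g 2 μ * eLpNorm h 2 μ) ∂μ :=
        lintegral_mono fun ξ => mul_le_mul_right (lintegral_mul_comp_sub_left_le hg hh ξ) _
    _ = eLpNorm g 2 μ * eLpNorm h 2 μ * ∫⁻ ξ, f ξ ∂μ := by
        rw [lintegral_mul_const _ hf, mul_comm]

end Young

theorem sqrt_one_add_sq_rpow (τ r : ℝ) : √(1 + τ ^ 2) ^ r = (1 + ‖τ‖ ^ 2) ^ (r / 2) := by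
  rw [Real.norm_eq_abs, sq_abs, Real.sqrt_eq_rpow, ← Real.rpow_mul (by positivity)]
  ring_nf

/-- Valued in `ℝ≥0∞`, so that the estimates run through lower Lebesgue integrals without
integrability side conditions. -/
noncomputable def japaneseBracket (τ : ℝ) : ℝ≥0∞ := ENNReal.ofReal √(1 + τ ^ 2)

namespace japaneseBracket

theorem one_le (τ : ℝ) : 1 ≤ japaneseBracket τ :=
  ENNReal.one_le_ofReal.2 (Real.one_le_sqrt.2 (by nlinarith [sq_nonneg τ]))

theorem ne_zero (τ : ℝ) : japaneseBracket τ ≠ 0 := (one_le τ |>.trans_lt' one_pos).ne'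

theorem ne_top (τ : ℝ) : japaneseBracket τ ≠ ∞ := ENNReal.ofReal_ne_top

@[fun_prop]
theorem measurable : Measurable japaneseBracket :=
  ENNReal.measurable_ofReal.comp (by fun_prop)

theorem neg (τ : ℝ) : japaneseBracket (-τ) = japaneseBracket τ := by
  simp [japaneseBracket]

theorem rpow_eq_ofReal (τ r : ℝ) :
    japaneseBracket τ ^ r = ENNReal.ofReal ((1 + ‖τ‖ ^ 2) ^ (r / 2)) := by
  rw [japaneseBracket, ENNReal.ofReal_rpow_of_pos (by positivity), sqrt_one_add_sq_rpow]

theorem sub_le (a b : ℝ) : japaneseBracket (a - b) ≤ japaneseBracket a + japaneseBracket b := by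
  have ha : |a| ≤ √(1 + a ^ 2) := Real.abs_le_sqrt (by linarith [sq_nonneg a])
  have hb : |b| ≤ √(1 + b ^ 2) := Real.abs_le_sqrt (by linarith)
  have hab : -(a * b) ≤ √(1 + a ^ 2) * √(1 + b ^ 2) := by
    nlinarith [neg_abs_le (a * b), abs_mul a b, mul_le_mul ha hb (abs_nonneg b) (by positivity)]
  rw [japaneseBracket, japaneseBracket, japaneseBracket,
    ← ENNReal.ofReal_add (by positivity) (by positivity)]
  refine ENNReal.ofReal_le_ofReal (Real.sqrt_le_iff.2 ⟨by positivity, ?_⟩)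
  nlinarith [Real.sq_sqrt (show 0 ≤ 1 + a ^ 2 by positivity),
    Real.sq_sqrt (show 0 ≤ 1 + b ^ 2 by positivity)]

theorem rpow_sub_le {p : ℝ} (hp0 : 0 ≤ p) (hp1 : p ≤ 1) (a b : ℝ) :
    japaneseBracket (a - b) ^ p ≤ japaneseBracket a ^ p + japaneseBracket b ^ p :=
  (ENNReal.rpow_le_rpow (sub_le a b) hp0).trans (ENNReal.rpow_add_le_add_rpow _ _ hp0 hp1)

theorem rpow_le_rpow {r r' : ℝ} (h : r ≤ r') (τ : ℝ) :
    japaneseBracket τ ^ r ≤ japaneseBracket τ ^ r' :=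
  ENNReal.rpow_le_rpow_of_exponent_le (one_le τ) h

theorem rpow_mul_rpow (r r' τ : ℝ) :
    japaneseBracket τ ^ r * japaneseBracket τ ^ r' = japaneseBracket τ ^ (r + r') :=
  (ENNReal.rpow_add _ _ (ne_zero τ) (ne_top τ)).symm

theorem rpow_neg_mul_rpow_mul (r τ : ℝ) (x : ℝ≥0∞) :
    japaneseBracket τ ^ (-r) * (japaneseBracket τ ^ r * x) = x := by
  rw [← mul_assoc, rpow_mul_rpow, neg_add_cancel, ENNReal.rpow_zero, one_mul]

theorem rpow_neg_mul_rpow_neg_mul_rpow_sub_le {p : ℝ} (hp0 : 0 ≤ p) (hp1 : p ≤ 1) (s ξ η : ℝ) :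
    japaneseBracket ξ ^ (-s) * japaneseBracket η ^ (-s) * japaneseBracket (ξ - η) ^ p
      ≤ japaneseBracket ξ ^ (p - s) * japaneseBracket η ^ (-s)
        + japaneseBracket ξ ^ (-s) * japaneseBracket η ^ (p - s) := by
  calc _ ≤ japaneseBracket ξ ^ (-s) * japaneseBracket η ^ (-s)
        * (japaneseBracket ξ ^ p + japaneseBracket η ^ p) :=
        mul_le_mul_right (rpow_sub_le hp0 hp1 ξ η) _
    _ = _ := by
        simp only [sub_eq_neg_add p s, ← rpow_mul_rpow]
        ring

theorem eLpNorm_rpow_neg_lt_top {s : ℝ} (hs : 1 / 2 < s) :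
    eLpNorm (fun τ => japaneseBracket τ ^ (-s)) 2 volume < ∞ := by
  have hint := integrable_rpow_neg_one_add_norm_sq (E := ℝ) (μ := volume) (r := 2 * s)
    (by rw [Module.finrank_self, Nat.cast_one]; linarith)
  rw [eLpNorm_eq_lintegral_rpow_enorm_toReal (by norm_num) (by norm_num)]
  refine ENNReal.rpow_lt_top_of_nonneg (by norm_num) (ne_of_lt ?_)
  convert hint.lintegral_lt_top using 3 with τ
  rw [enorm_eq_self, ← ENNReal.rpow_mul, rpow_eq_ofReal]
  congr 2
  rw [ENNReal.toReal_ofNat]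
  ring

theorem eLpNorm_rpow_ne_zero (r : ℝ) :
    eLpNorm (fun τ => japaneseBracket τ ^ r) 2 volume ≠ 0 := by
  rw [Ne, eLpNorm_eq_zero_iff (by fun_prop) two_ne_zero]
  intro h
  obtain ⟨τ, hτ⟩ := h.exists
  simp [ENNReal.rpow_eq_zero_iff, ne_zero, ne_top] at hτ

end japaneseBracket

open japaneseBracket in
theorem lintegral_lintegral_japaneseBracket_kernel_le {s p : ℝ} (hp0 : 0 ≤ p) (hp1 : p ≤ 1)
    (hps : p ≤ s) {f g h : ℝ → ℝ≥0∞} (hf : Measurable f) (hg : Measurable g)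
    (hh : Measurable h) :
    ∫⁻ ξ, ∫⁻ η, japaneseBracket ξ ^ (-s) * f ξ * (japaneseBracket η ^ (-s) * g η)
        * (japaneseBracket (ξ - η) ^ p * h (ξ - η))
      ≤ 2 * eLpNorm (fun τ => japaneseBracket τ ^ (-s)) 2 volume
          * (eLpNorm f 2 volume * eLpNorm g 2 volume * eLpNorm h 2 volume) := by
  set w := fun τ => japaneseBracket τ ^ (-s)
  set v := fun τ => japaneseBracket τ ^ (p - s)
  have hv_le (τ : ℝ) : v τ ≤ 1 := by
    simpa only [ENNReal.rpow_zero] using rpow_le_rpow (show p - s ≤ 0 by linarith) τ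
  have hv_norm {u : ℝ → ℝ≥0∞} : eLpNorm (fun τ => v τ * u τ) 2 volume ≤ eLpNorm u 2 volume :=
    eLpNorm_mono_enorm fun τ => by
      simpa only [enorm_eq_self] using mul_le_of_le_one_left bot_le (hv_le τ)
  have hw_mul {u : ℝ → ℝ≥0∞} (hu : Measurable u) :
      ∫⁻ τ, w τ * u τ ≤ eLpNorm w 2 volume * eLpNorm u 2 volume :=
    lintegral_mul_le_eLpNorm_two_mul (by fun_prop) hu.aemeasurable
  have hsplit (ξ η : ℝ) :
      w ξ * f ξ * (w η * g η) * (japaneseBracket (ξ - η) ^ p * h (ξ - η))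
        ≤ v ξ * f ξ * (w η * g η) * h (ξ - η) + w ξ * f ξ * (v η * g η) * h (ξ - η) := by
    calc _ = w ξ * w η * japaneseBracket (ξ - η) ^ p * (f ξ * g η * h (ξ - η)) := by ring
      _ ≤ (v ξ * w η + w ξ * v η) * (f ξ * g η * h (ξ - η)) :=
        mul_le_mul_left (rpow_neg_mul_rpow_neg_mul_rpow_sub_le hp0 hp1 s ξ η) _
      _ = _ := by ring
  calc _ ≤ ∫⁻ ξ, ∫⁻ η, v ξ * f ξ * (w η * g η) * h (ξ - η) + w ξ * f ξ * (v η * g η) * h (ξ - η) :=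
        lintegral_mono fun ξ => lintegral_mono fun η => hsplit ξ η
    _ = (∫⁻ ξ, ∫⁻ η, v ξ * f ξ * (w η * g η) * h (ξ - η))
          + ∫⁻ ξ, ∫⁻ η, w ξ * f ξ * (v η * g η) * h (ξ - η) := by
        refine (lintegral_congr fun ξ => lintegral_add_left ?_ _).trans (lintegral_add_left ?_ _)
        · fun_prop
        · exact Measurable.lintegral_prod_right' (f := fun z : ℝ × ℝ =>
            v z.1 * f z.1 * (w z.2 * g z.2) * h (z.1 - z.2)) (by fun_prop)
    _ ≤ eLpNorm (fun τ => v τ * f τ) 2 volume * eLpNorm h 2 volume * (∫⁻ η, w η * g η)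
          + eLpNorm (fun τ => v τ * g τ) 2 volume * eLpNorm h 2 volume * ∫⁻ ξ, w ξ * f ξ :=
        add_le_add
          (lintegral_lintegral_mul_comp_sub_le_snd (μ := volume) (f := fun τ => v τ * f τ)
            (g := fun τ => w τ * g τ) (by fun_prop) (by fun_prop) hh)
          (lintegral_lintegral_mul_comp_sub_le_fst (μ := volume) (f := fun τ => w τ * f τ)
            (g := fun τ => v τ * g τ) (by fun_prop) (by fun_prop) hh)
    _ ≤ eLpNorm f 2 volume * eLpNorm h 2 volume * (eLpNorm w 2 volume * eLpNorm g 2 volume)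
          + eLpNorm g 2 volume * eLpNorm h 2 volume
            * (eLpNorm w 2 volume * eLpNorm f 2 volume) := by
        gcongr ?_ * _ * ?_ + ?_ * _ * ?_
        exacts [hv_norm, hw_mul hg, hv_norm, hw_mul hf]
    _ = _ := by ring

section

variable {V : Type*} [NormedAddCommGroup V] [InnerProductSpace ℝ V] [FiniteDimensional ℝ V]
  [MeasurableSpace V] [BorelSpace V]

theorem fourierInv_mul_eq_convolution (G H : 𝓢(V, ℂ)) (ξ : V) :
    𝓕⁻ (SchwartzMap.pairing (.mul ℂ ℂ) G H) ξ
      = ∫ η, 𝓕⁻ (⇑G) η * 𝓕⁻ (⇑H) (ξ - η) := by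
  have h : 𝓕⁻ (SchwartzMap.pairing (.mul ℂ ℂ) G H)
      = SchwartzMap.convolution (.mul ℂ ℂ) (𝓕⁻ G) (𝓕⁻ H) := by
    simp [SchwartzMap.convolution]
  rw [h, SchwartzMap.convolution_apply]
  simp [convolution, SchwartzMap.fourierInv_coe]

theorem integral_mul_mul_eq_integral_fourier_mul_convolution (F G H : 𝓢(V, ℂ)) :
    ∫ t, F t * G t * H t = ∫ ξ, 𝓕 (⇑F) ξ * ∫ η, 𝓕⁻ (⇑G) η * 𝓕⁻ (⇑H) (ξ - η) := by
  have := SchwartzMap.integral_fourierInv_mul_eq (𝓕 F) (SchwartzMap.pairing (.mul ℂ ℂ) G H)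
  simp only [FourierTransform.fourierInv_fourier_eq, SchwartzMap.pairing_apply_apply,
    ContinuousLinearMap.mul_apply', fourierInv_mul_eq_convolution] at this
  rw [SchwartzMap.fourier_coe] at this
  simpa only [mul_assoc] using this

end

open japaneseBracket in
theorem eLpNorm_japaneseBracket_rpow_mul_fourier (σ : ℝ) (φ : 𝓢(ℝ, ℂ)) :
    eLpNorm (fun τ => japaneseBracket τ ^ σ * ‖𝓕 (⇑φ) τ‖ₑ) 2 volume
      = ENNReal.ofReal (sobNorm1 σ φ) := by
  have hw := Function.hasTemperateGrowth_one_add_norm_sq_rpow ℝ (σ / 2)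
  set ψ := SchwartzMap.smulLeftCLM ℂ (fun τ : ℝ => (1 + ‖τ‖ ^ 2) ^ (σ / 2)) (𝓕 φ)
  have hψ (τ : ℝ) : ‖ψ τ‖ = √(1 + τ ^ 2) ^ σ * ‖𝓕 (⇑φ) τ‖ := by
    rw [SchwartzMap.smulLeftCLM_apply_apply hw, norm_smul, sqrt_one_add_sq_rpow,
      Real.norm_of_nonneg (by positivity), SchwartzMap.fourier_coe]
  calc eLpNorm (fun τ => japaneseBracket τ ^ σ * ‖𝓕 (⇑φ) τ‖ₑ) 2 volume
      = eLpNorm ψ 2 volume := by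
        rw [← eLpNorm_enorm ψ]
        congr 1
        ext τ
        rw [← ofReal_norm (ψ τ), hψ, ENNReal.ofReal_mul (by positivity), ofReal_norm,
          japaneseBracket, ENNReal.ofReal_rpow_of_pos (by positivity)]
    _ = ENNReal.ofReal (sobNorm1 σ φ) := by
        rw [(ψ.memLp 2 volume).eLpNorm_eq_integral_rpow_norm (by norm_num) (by norm_num), sobNorm1]
        have h2 : ENNReal.toReal 2 = 2 := by norm_num
        rw [h2, inv_eq_one_div]
        congr 3 with τ
        rw [hψ, Real.mul_rpow (by positivity) (norm_nonneg _), ← Real.rpow_mul (Real.sqrt_nonneg _),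
          mul_comm σ, Real.rpow_two]

open japaneseBracket in
theorem eLpNorm_japaneseBracket_rpow_mul_fourierInv (σ : ℝ) (φ : 𝓢(ℝ, ℂ)) :
    eLpNorm (fun τ => japaneseBracket τ ^ σ * ‖𝓕⁻ (⇑φ) τ‖ₑ) 2 volume
      = ENNReal.ofReal (sobNorm1 σ φ) := by
  have hreflect := eLpNorm_comp_measurePreserving (p := 2)
    (g := fun τ => japaneseBracket τ ^ σ * ‖𝓕 (⇑φ) τ‖ₑ)
    ((measurable.pow_const σ).mul (𝓕 φ).continuous.measurable.enorm).aestronglyMeasurable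
    (Measure.measurePreserving_neg volume)
  rw [← eLpNorm_japaneseBracket_rpow_mul_fourier, ← hreflect]
  congr 1 with τ
  rw [Function.comp_apply, Real.fourierInv_eq_fourier_neg, japaneseBracket.neg]

theorem sobNorm1_nonneg (σ : ℝ) (F : ℝ → ℂ) : 0 ≤ sobNorm1 σ F :=
  Real.rpow_nonneg (integral_nonneg fun τ => by positivity) _

theorem sobNorm1_mono {σ₁ σ₂ : ℝ} (h : σ₁ ≤ σ₂) (φ : 𝓢(ℝ, ℂ)) : sobNorm1 σ₁ φ ≤ sobNorm1 σ₂ φ := by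
  rw [← ENNReal.ofReal_le_ofReal_iff (sobNorm1_nonneg _ _),
    ← eLpNorm_japaneseBracket_rpow_mul_fourier, ← eLpNorm_japaneseBracket_rpow_mul_fourier]
  exact eLpNorm_mono_enorm fun τ => by
    simpa only [enorm_eq_self] using mul_le_mul_left (japaneseBracket.rpow_le_rpow h τ) _

open japaneseBracket in
theorem enorm_integral_mul_mul_le {s p : ℝ} (hp0 : 0 ≤ p) (hp1 : p ≤ 1) (hps : p ≤ s)
    (F G H : 𝓢(ℝ, ℂ)) :
    ‖∫ t, F t * G t * H t‖ₑ
      ≤ 2 * eLpNorm (fun τ => japaneseBracket τ ^ (-s)) 2 volume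
          * (ENNReal.ofReal (sobNorm1 s F) * ENNReal.ofReal (sobNorm1 s G)
            * ENNReal.ofReal (sobNorm1 (-p) H)) := by
  have hF : Continuous (𝓕 (⇑F)) := (𝓕 F).continuous
  have hG : Continuous (𝓕⁻ (⇑G)) := SchwartzMap.fourierInv_coe G ▸ (𝓕⁻ G).continuous
  have hH : Continuous (𝓕⁻ (⇑H)) := SchwartzMap.fourierInv_coe H ▸ (𝓕⁻ H).continuous
  set f := fun τ => japaneseBracket τ ^ s * ‖𝓕 (⇑F) τ‖ₑ
  set g := fun τ => japaneseBracket τ ^ s * ‖𝓕⁻ (⇑G) τ‖ₑ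
  set h := fun τ => japaneseBracket τ ^ (-p) * ‖𝓕⁻ (⇑H) τ‖ₑ
  have hf_eq (τ : ℝ) : ‖𝓕 (⇑F) τ‖ₑ = japaneseBracket τ ^ (-s) * f τ :=
    (rpow_neg_mul_rpow_mul s τ _).symm
  have hg_eq (τ : ℝ) : ‖𝓕⁻ (⇑G) τ‖ₑ = japaneseBracket τ ^ (-s) * g τ :=
    (rpow_neg_mul_rpow_mul s τ _).symm
  have hh_eq (τ : ℝ) : ‖𝓕⁻ (⇑H) τ‖ₑ = japaneseBracket τ ^ p * h τ := by
    simpa only [neg_neg] using (rpow_neg_mul_rpow_mul (-p) τ _).symm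
  calc ‖∫ t, F t * G t * H t‖ₑ
      = ‖∫ ξ, 𝓕 (⇑F) ξ * ∫ η, 𝓕⁻ (⇑G) η * 𝓕⁻ (⇑H) (ξ - η)‖ₑ := by
        rw [integral_mul_mul_eq_integral_fourier_mul_convolution]
    _ ≤ ∫⁻ ξ, ‖𝓕 (⇑F) ξ‖ₑ * ∫⁻ η, ‖𝓕⁻ (⇑G) η‖ₑ * ‖𝓕⁻ (⇑H) (ξ - η)‖ₑ := by
        refine (enorm_integral_le_lintegral_enorm _).trans (lintegral_mono fun ξ => ?_)
        rw [enorm_mul]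
        refine mul_le_mul_right ((enorm_integral_le_lintegral_enorm _).trans_eq ?_) _
        simp only [enorm_mul]
    _ = ∫⁻ ξ, ∫⁻ η, japaneseBracket ξ ^ (-s) * f ξ * (japaneseBracket η ^ (-s) * g η)
          * (japaneseBracket (ξ - η) ^ p * h (ξ - η)) := by
        refine lintegral_congr fun ξ => ?_
        rw [← lintegral_const_mul _ (by fun_prop)]
        simp only [hf_eq, hg_eq, hh_eq, mul_assoc]
    _ ≤ 2 * eLpNorm (fun τ => japaneseBracket τ ^ (-s)) 2 volume
          * (eLpNorm f 2 volume * eLpNorm g 2 volume * eLpNorm h 2 volume) :=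
        lintegral_lintegral_japaneseBracket_kernel_le hp0 hp1 hps (by fun_prop) (by fun_prop)
          (by fun_prop)
    _ = _ := by
        rw [eLpNorm_japaneseBracket_rpow_mul_fourier, eLpNorm_japaneseBracket_rpow_mul_fourierInv,
          eLpNorm_japaneseBracket_rpow_mul_fourierInv]

/-- Temporal trilinear estimate: |∫ FGH| ≲ ‖F‖_{H^{1/2+ε}} ‖G‖_{H^{1/2+ε}} ‖H‖_{H^{-1/4+ε}}. -/
theorem stmt_9 (ε : ℝ) (hε : 0 < ε) :
    ∃ C > 0, ∀ F G H : SchwartzMap ℝ ℂ,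
      ‖∫ t : ℝ, F t * G t * H t‖
        ≤ C * sobNorm1 (1/2 + ε) F * sobNorm1 (1/2 + ε) G * sobNorm1 (-(1/4) + ε) H := by
  set K := 2 * eLpNorm (fun τ => japaneseBracket τ ^ (-(1 / 2 + ε))) 2 volume
  have hK_ne_top : K ≠ ∞ := ENNReal.mul_ne_top (by norm_num)
    (japaneseBracket.eLpNorm_rpow_neg_lt_top (by linarith)).ne
  have hK_pos : 0 < K.toReal := ENNReal.toReal_pos
    (mul_ne_zero two_ne_zero (japaneseBracket.eLpNorm_rpow_ne_zero _)) hK_ne_top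
  refine ⟨K.toReal, hK_pos, fun F G H => ?_⟩
  have hA := sobNorm1_nonneg (1 / 2 + ε) F
  have hB := sobNorm1_nonneg (1 / 2 + ε) G
  have hD := sobNorm1_nonneg (-(1 / 4) + ε) H
  rw [← ENNReal.ofReal_le_ofReal_iff (by positivity), ofReal_norm,
    ENNReal.ofReal_mul (by positivity), ENNReal.ofReal_mul (by positivity),
    ENNReal.ofReal_mul hK_pos.le, ENNReal.ofReal_toReal hK_ne_top]
  calc ‖∫ t, F t * G t * H t‖ₑ
      ≤ K * (ENNReal.ofReal (sobNorm1 (1 / 2 + ε) F) * ENNReal.ofReal (sobNorm1 (1 / 2 + ε) G)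
          * ENNReal.ofReal (sobNorm1 (-(1 / 4)) H)) :=
        enorm_integral_mul_mul_le (by norm_num) (by norm_num) (by linarith) F G H
    _ ≤ K * (ENNReal.ofReal (sobNorm1 (1 / 2 + ε) F) * ENNReal.ofReal (sobNorm1 (1 / 2 + ε) G)
          * ENNReal.ofReal (sobNorm1 (-(1 / 4) + ε) H)) := by
        gcongr
        exact sobNorm1_mono (by linarith) H
    _ = _ := by ring
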